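/- arXiv:1905.12919 — 3 statements merged into one kernel-verified Lean document; each statement's English description precedes it below -/
import Mathlib

section
/- Let H be a Hilbert space, D : Dom(D) ⊆ H → H a densely defined operator, and φ₁, φ₂ : H → H bounded self-adjoint operators with φ₁² + φ₂² = 1 (acting by multiplication, commuting with each other). Suppose that for j = 1,2 the commutators [D, φⱼ] extend to bounded operators with ‖[D,φⱼ]‖ ≤ η. Then for every s ∈ Dom(D), √2·‖Ds‖ ≥ ‖D(φ₁ s)‖ + ‖D(φ₂ s)‖ − 2η‖s‖. -/
open ContinuousLinearMap in
lemma aux_norm_sq {H : Type*} [NormedAddCommGroup H] [InnerProductSpace ℂ H] [CompleteSpace H]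
    (φ₁ φ₂ : H →L[ℂ] H) (h₁ : IsSelfAdjoint φ₁) (h₂ : IsSelfAdjoint φ₂)
    (hsum : φ₁ * φ₁ + φ₂ * φ₂ = 1) (x : H) :
    ‖φ₁ x‖ ^ 2 + ‖φ₂ x‖ ^ 2 = ‖x‖ ^ 2 := by
  have e1 : (inner ℂ (φ₁ (φ₁ x) + φ₂ (φ₂ x)) x : ℂ) = inner ℂ x x := by
    have := congrArg (fun T : H →L[ℂ] H => T x) hsum
    simp only [ContinuousLinearMap.add_apply, ContinuousLinearMap.mul_apply,
      ContinuousLinearMap.one_apply] at this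
    rw [this]
  have a1 : (inner ℂ (φ₁ x) (φ₁ x) : ℂ) = inner ℂ (φ₁ (φ₁ x)) x := by
    nth_rewrite 2 [← h₁.adjoint_eq]
    rw [ContinuousLinearMap.adjoint_inner_right]
  have a2 : (inner ℂ (φ₂ x) (φ₂ x) : ℂ) = inner ℂ (φ₂ (φ₂ x)) x := by
    nth_rewrite 2 [← h₂.adjoint_eq]
    rw [ContinuousLinearMap.adjoint_inner_right]
  have hc : (inner ℂ (φ₁ x) (φ₁ x) : ℂ) + inner ℂ (φ₂ x) (φ₂ x) = inner ℂ x x := by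
    rw [a1, a2, ← inner_add_left, e1]
  rw [inner_self_eq_norm_sq_to_K, inner_self_eq_norm_sq_to_K, inner_self_eq_norm_sq_to_K] at hc
  exact_mod_cast hc

/-- If `φ₁, φ₂` are bounded self-adjoint commuting operators with `φ₁² + φ₂² = 1`, and the
commutators `[D, φⱼ]` are bounded by `η`, then `√2‖Ds‖ ≥ ‖D(φ₁s)‖ + ‖D(φ₂s)‖ − 2η‖s‖`. -/
theorem stmt2 {H : Type*} [NormedAddCommGroup H] [InnerProductSpace ℂ H] [CompleteSpace H]
    (D : H →ₗ[ℂ] H) (φ₁ φ₂ : H →L[ℂ] H)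
    (h₁ : IsSelfAdjoint φ₁) (h₂ : IsSelfAdjoint φ₂)
    (hcomm : Commute φ₁ φ₂)
    (hsum : φ₁ * φ₁ + φ₂ * φ₂ = 1)
    (η : ℝ) (hη : 0 ≤ η)
    (hb₁ : ∀ s, ‖D (φ₁ s) - φ₁ (D s)‖ ≤ η * ‖s‖)
    (hb₂ : ∀ s, ‖D (φ₂ s) - φ₂ (D s)‖ ≤ η * ‖s‖) :
    ∀ s, Real.sqrt 2 * ‖D s‖ ≥ ‖D (φ₁ s)‖ + ‖D (φ₂ s)‖ - 2 * η * ‖s‖ := by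
  intro s
  have key : ‖φ₁ (D s)‖ ^ 2 + ‖φ₂ (D s)‖ ^ 2 = ‖D s‖ ^ 2 :=
    aux_norm_sq φ₁ φ₂ h₁ h₂ hsum (D s)
  set a := ‖φ₁ (D s)‖
  set b := ‖φ₂ (D s)‖
  have ha : 0 ≤ a := norm_nonneg _
  have hb : 0 ≤ b := norm_nonneg _
  have habs : a + b ≤ Real.sqrt 2 * ‖D s‖ := by
    have h2 : (a + b) ^ 2 ≤ 2 * ‖D s‖ ^ 2 := by nlinarith [sq_nonneg (a - b)]
    have := Real.sqrt_le_sqrt h2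
    rw [Real.sqrt_sq (by positivity), Real.sqrt_mul (by norm_num),
      Real.sqrt_sq (norm_nonneg _)] at this
    exact this
  have t1 : ‖D (φ₁ s)‖ ≤ a + η * ‖s‖ := by
    calc ‖D (φ₁ s)‖ = ‖(D (φ₁ s) - φ₁ (D s)) + φ₁ (D s)‖ := by rw [sub_add_cancel]
      _ ≤ ‖D (φ₁ s) - φ₁ (D s)‖ + a := norm_add_le _ _
      _ ≤ η * ‖s‖ + a := by linarith [hb₁ s]
      _ = a + η * ‖s‖ := by ring
  have t2 : ‖D (φ₂ s)‖ ≤ b + η * ‖s‖ := by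
    calc ‖D (φ₂ s)‖ = ‖(D (φ₂ s) - φ₂ (D s)) + φ₂ (D s)‖ := by rw [sub_add_cancel]
      _ ≤ ‖D (φ₂ s) - φ₂ (D s)‖ + b := norm_add_le _ _
      _ ≤ η * ‖s‖ + b := by linarith [hb₂ s]
      _ = b + η * ‖s‖ := by ring
  linarith
end

section
/- Let H = H₁ ⊕ H₂ be an orthogonal decomposition of a Hilbert space realized by self-adjoint operators φ₁, φ₂ with φ₁² + φ₂² = 1. Suppose T : Dom(T) → H satisfies ‖T(φ₁ s)‖ ≥ (c₁/β)‖φ₁ s‖ and ‖T(φ₂ s)‖² ≥ (δ₁/β²)‖φ₂ s‖² − (C ε/β²)‖s‖² for all s ∈ Dom(T), and ‖[T,φⱼ]s‖ ≤ (Cε/β)‖s‖. Then there exist constants c₂ > 0 and ε₀ > 0 such that for all 0 < ε ≤ ε₀, ‖Ts‖ ≥ (c₂/β)‖s‖ for all s ∈ Dom(T). -/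
private lemma sqrt_cancel_aux {x y : ℝ} (hx : 0 ≤ x) (hy : 0 ≤ y) (h : x ^ 2 ≤ y ^ 2) :
    x ≤ y := by nlinarith

open scoped ComplexInnerProductSpace in
/-- Gluing two coercive lower bounds via a quadratic partition of unity `φ₁² + φ₂² = 1`
into a global lower bound `‖Ts‖ ≥ (c₂/β)‖s‖` for small enough `ε`. -/
theorem stmt3 {H : Type*} [NormedAddCommGroup H] [InnerProductSpace ℂ H] [CompleteSpace H]
    (φ₁ φ₂ : H →L[ℂ] H)
    (h₁ : IsSelfAdjoint φ₁) (h₂ : IsSelfAdjoint φ₂)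
    (hsum : φ₁ * φ₁ + φ₂ * φ₂ = 1)
    (β δ₁ c₁ C : ℝ) (hβ : 0 < β) (hδ₁ : 0 < δ₁) (hc₁ : 0 < c₁) (hC : 0 < C)
    (T : ℝ → (H →ₗ[ℂ] H))
    (hT1 : ∀ ε > (0 : ℝ), ∀ s, ‖T ε (φ₁ s)‖ ≥ (c₁ / β) * ‖φ₁ s‖)
    (hT2 : ∀ ε > (0 : ℝ), ∀ s,
      ‖T ε (φ₂ s)‖ ^ 2 ≥ (δ₁ / β ^ 2) * ‖φ₂ s‖ ^ 2 - (C * ε / β ^ 2) * ‖s‖ ^ 2)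
    (hcomm1 : ∀ ε > (0 : ℝ), ∀ s, ‖T ε (φ₁ s) - φ₁ (T ε s)‖ ≤ (C * ε / β) * ‖s‖)
    (hcomm2 : ∀ ε > (0 : ℝ), ∀ s, ‖T ε (φ₂ s) - φ₂ (T ε s)‖ ≤ (C * ε / β) * ‖s‖) :
    ∃ c₂ > (0 : ℝ), ∃ ε₀ > (0 : ℝ), ∀ ε, 0 < ε → ε ≤ ε₀ →
      ∀ s, ‖T ε s‖ ≥ (c₂ / β) * ‖s‖ := by
  -- partition of unity identity in norms
  have key : ∀ x : H, ‖φ₁ x‖ ^ 2 + ‖φ₂ x‖ ^ 2 = ‖x‖ ^ 2 := by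
    intro x
    have h : (⟪(φ₁ * φ₁ + φ₂ * φ₂) x, x⟫ : ℂ) = ⟪(1 : H →L[ℂ] H) x, x⟫ := by rw [hsum]
    have e1 : (⟪φ₁ (φ₁ x), x⟫ : ℂ) = ⟪φ₁ x, φ₁ x⟫ := h₁.isSymmetric (φ₁ x) x
    have e2 : (⟪φ₂ (φ₂ x), x⟫ : ℂ) = ⟪φ₂ x, φ₂ x⟫ := h₂.isSymmetric (φ₂ x) x
    simp only [ContinuousLinearMap.add_apply, ContinuousLinearMap.mul_apply,
      ContinuousLinearMap.one_apply, inner_add_left, e1, e2,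
      inner_self_eq_norm_sq_to_K] at h
    exact_mod_cast h
  have contr : ∀ x : H, ‖φ₁ x‖ ≤ ‖x‖ ∧ ‖φ₂ x‖ ≤ ‖x‖ := by
    intro x
    have := key x
    constructor <;> nlinarith [norm_nonneg (φ₁ x), norm_nonneg (φ₂ x), norm_nonneg x]
  have hs2 : (0:ℝ) < Real.sqrt 2 := Real.sqrt_pos.mpr (by norm_num)
  have hs2sq : Real.sqrt 2 ^ 2 = 2 := Real.sq_sqrt (by norm_num)
  have hs2le : Real.sqrt 2 ≤ 2 := by nlinarith
  set m₁ : ℝ := c₁ / Real.sqrt 2 with hm₁def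
  set m₂ : ℝ := Real.sqrt (δ₁ / 2) with hm₂def
  have hm₁ : 0 < m₁ := div_pos hc₁ hs2
  have hm₂ : 0 < m₂ := Real.sqrt_pos.mpr (by linarith)
  have hm₂sq : m₂ ^ 2 = δ₁ / 2 := Real.sq_sqrt (by linarith)
  have hm₁mul : m₁ * Real.sqrt 2 = c₁ := by
    rw [hm₁def]; field_simp
  refine ⟨min m₁ m₂ / 4, by positivity,
    min (m₁ / (2 * C)) (min (m₂ / (8 * C)) (m₂ ^ 2 / (64 * C))), by positivity, ?_⟩
  intro ε hε hε₀ s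
  set c₂ : ℝ := min m₁ m₂ / 4 with hc₂def
  have hc₂₁ : c₂ ≤ m₁ / 4 := by
    rw [hc₂def]; have := min_le_left m₁ m₂; linarith
  have hc₂₂ : c₂ ≤ m₂ / 4 := by
    rw [hc₂def]; have := min_le_right m₁ m₂; linarith
  have hCε1 : C * ε ≤ m₁ / 2 := by
    have h := le_trans hε₀ (min_le_left _ _)
    rw [le_div_iff₀ (by positivity)] at h
    nlinarith
  have hCε2 : C * ε ≤ m₂ / 8 := by
    have h := le_trans hε₀ (le_trans (min_le_right _ _) (min_le_left _ _))
    rw [le_div_iff₀ (by positivity)] at h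
    nlinarith
  have hCε3 : C * ε ≤ m₂ ^ 2 / 64 := by
    have h := le_trans hε₀ (le_trans (min_le_right _ _) (min_le_right _ _))
    rw [le_div_iff₀ (by positivity)] at h
    nlinarith
  have hCεpos : 0 < C * ε := mul_pos hC hε
  have hsC : Real.sqrt (C * ε) ^ 2 = C * ε := Real.sq_sqrt hCεpos.le
  have hsCnn : 0 ≤ Real.sqrt (C * ε) := Real.sqrt_nonneg _
  have hsCb : Real.sqrt (C * ε) ≤ m₂ / 8 := by
    have h1 : Real.sqrt (C * ε) ≤ Real.sqrt (m₂ ^ 2 / 64) := Real.sqrt_le_sqrt hCε3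
    have h2 : Real.sqrt (m₂ ^ 2 / 64) = m₂ / 8 := by
      rw [show m₂ ^ 2 / 64 = (m₂ / 8) ^ 2 by ring, Real.sqrt_sq (by positivity)]
    linarith
  have hab : ‖φ₁ s‖ ^ 2 + ‖φ₂ s‖ ^ 2 = ‖s‖ ^ 2 := key s
  have hn : 0 ≤ ‖s‖ := norm_nonneg s
  have ha : 0 ≤ ‖φ₁ s‖ := norm_nonneg _
  have hb : 0 ≤ ‖φ₂ s‖ := norm_nonneg _
  -- estimate via φ₁
  have est1 : ‖T ε s‖ ≥ (c₁ / β) * ‖φ₁ s‖ - (C * ε / β) * ‖s‖ := by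
    have l1 : ‖T ε (φ₁ s)‖ ≤ ‖T ε (φ₁ s) - φ₁ (T ε s)‖ + ‖φ₁ (T ε s)‖ := by
      calc ‖T ε (φ₁ s)‖ = ‖(T ε (φ₁ s) - φ₁ (T ε s)) + φ₁ (T ε s)‖ := by
            congr 1; abel
        _ ≤ _ := norm_add_le _ _
    have l2 := hcomm1 ε hε s
    have l3 := (contr (T ε s)).1
    have l4 := hT1 ε hε s
    linarith
  -- estimate via φ₂
  have est2 : ‖T ε s‖ ≥
      (m₂ / β) * ‖φ₂ s‖ - (Real.sqrt (C * ε) / β) * ‖s‖ - (C * ε / β) * ‖s‖ := by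
    have hu : 0 ≤ ‖T ε (φ₂ s)‖ := norm_nonneg _
    have l1 : ‖T ε (φ₂ s)‖ ≤ ‖T ε (φ₂ s) - φ₂ (T ε s)‖ + ‖φ₂ (T ε s)‖ := by
      calc ‖T ε (φ₂ s)‖ = ‖(T ε (φ₂ s) - φ₂ (T ε s)) + φ₂ (T ε s)‖ := by
            congr 1; abel
        _ ≤ _ := norm_add_le _ _
    have l2 := hcomm2 ε hε s
    have l3 := (contr (T ε s)).2
    have l4 := hT2 ε hε s
    have ht2 : (Real.sqrt (C * ε) / β) ^ 2 = C * ε / β ^ 2 := by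
      rw [div_pow, hsC]
    have sq1 : ((m₂ / β) * ‖φ₂ s‖) ^ 2
        ≤ (‖T ε (φ₂ s)‖ + (Real.sqrt (C * ε) / β) * ‖s‖) ^ 2 := by
      have expand : (‖T ε (φ₂ s)‖ + (Real.sqrt (C * ε) / β) * ‖s‖) ^ 2
          = ‖T ε (φ₂ s)‖ ^ 2 + 2 * ‖T ε (φ₂ s)‖ * ((Real.sqrt (C * ε) / β) * ‖s‖)
            + (C * ε / β ^ 2) * ‖s‖ ^ 2 := by
        rw [← ht2]; ring
      have lhs : ((m₂ / β) * ‖φ₂ s‖) ^ 2 = (m₂ ^ 2 / β ^ 2) * ‖φ₂ s‖ ^ 2 := by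
        field_simp
      rw [expand, lhs, hm₂sq]
      have hβ2 : (0:ℝ) < β ^ 2 := by positivity
      have hcross : 0 ≤ 2 * ‖T ε (φ₂ s)‖ * ((Real.sqrt (C * ε) / β) * ‖s‖) := by positivity
      have hhalf : (δ₁ / 2 / β ^ 2) * ‖φ₂ s‖ ^ 2 ≤ (δ₁ / β ^ 2) * ‖φ₂ s‖ ^ 2 := by
        have hd : δ₁ / 2 / β ^ 2 ≤ δ₁ / β ^ 2 := by gcongr; linarith
        exact mul_le_mul_of_nonneg_right hd (sq_nonneg _)
      linarith
    have sq2 : (m₂ / β) * ‖φ₂ s‖ ≤ ‖T ε (φ₂ s)‖ + (Real.sqrt (C * ε) / β) * ‖s‖ := by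
      exact sqrt_cancel_aux (by positivity) (by positivity) sq1
    linarith
  -- combine
  rcases le_total ‖φ₁ s‖ ‖φ₂ s‖ with hcase | hcase
  · -- ‖φ₂ s‖ dominates
    have hbn : ‖s‖ ≤ Real.sqrt 2 * ‖φ₂ s‖ := by
      refine sqrt_cancel_aux hn (mul_nonneg hs2.le hb) ?_
      rw [mul_pow, hs2sq]
      have := pow_le_pow_left₀ ha hcase 2
      linarith
    have hsuff : c₂ * ‖s‖ ≤ m₂ * ‖φ₂ s‖ - Real.sqrt (C * ε) * ‖s‖ - C * ε * ‖s‖ := by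
      have p1 : m₂ * ‖s‖ ≤ 2 * (m₂ * ‖φ₂ s‖) := by
        have h := mul_le_mul_of_nonneg_left hbn hm₂.le
        have h2 := mul_le_mul_of_nonneg_right hs2le (mul_nonneg hm₂.le hb)
        calc m₂ * ‖s‖ ≤ m₂ * (Real.sqrt 2 * ‖φ₂ s‖) := h
          _ = Real.sqrt 2 * (m₂ * ‖φ₂ s‖) := by ring
          _ ≤ 2 * (m₂ * ‖φ₂ s‖) := h2
      have p3 := mul_le_mul_of_nonneg_right hsCb hn
      have p4 := mul_le_mul_of_nonneg_right hCε2 hn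
      have p5 := mul_le_mul_of_nonneg_right hc₂₂ hn
      have p6 : 0 ≤ m₂ * ‖s‖ := mul_nonneg hm₂.le hn
      linarith
    calc (c₂ / β) * ‖s‖ = (c₂ * ‖s‖) / β := by ring
      _ ≤ (m₂ * ‖φ₂ s‖ - Real.sqrt (C * ε) * ‖s‖ - C * ε * ‖s‖) / β := by
          gcongr
      _ = (m₂ / β) * ‖φ₂ s‖ - (Real.sqrt (C * ε) / β) * ‖s‖ - (C * ε / β) * ‖s‖ := by ring
      _ ≤ ‖T ε s‖ := est2
  · -- ‖φ₁ s‖ dominates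
    have hbn : ‖s‖ ≤ Real.sqrt 2 * ‖φ₁ s‖ := by
      refine sqrt_cancel_aux hn (mul_nonneg hs2.le ha) ?_
      rw [mul_pow, hs2sq]
      have := pow_le_pow_left₀ hb hcase 2
      linarith
    have hsuff : c₂ * ‖s‖ ≤ c₁ * ‖φ₁ s‖ - C * ε * ‖s‖ := by
      have p1 : m₁ * ‖s‖ ≤ c₁ * ‖φ₁ s‖ := by
        have h := mul_le_mul_of_nonneg_left hbn hm₁.le
        rw [show m₁ * (Real.sqrt 2 * ‖φ₁ s‖) = m₁ * Real.sqrt 2 * ‖φ₁ s‖ from by ring,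
          hm₁mul] at h
        exact h
      have p4 := mul_le_mul_of_nonneg_right hCε1 hn
      have p5 := mul_le_mul_of_nonneg_right hc₂₁ hn
      have p6 : 0 ≤ m₁ * ‖s‖ := mul_nonneg hm₁.le hn
      linarith
    calc (c₂ / β) * ‖s‖ = (c₂ * ‖s‖) / β := by ring
      _ ≤ (c₁ * ‖φ₁ s‖ - C * ε * ‖s‖) / β := by gcongr
      _ = (c₁ / β) * ‖φ₁ s‖ - (C * ε / β) * ‖s‖ := by ring
      _ ≤ ‖T ε s‖ := est1
end

section
/- Let H be a Hilbert space, D self-adjoint on Dom(D), and W a bounded self-adjoint operator with W² ≥ δ₁·Id for some δ₁ > 0, such that the anticommutator DW + WD extends to a bounded operator of norm at most η. Then for every s ∈ Dom(D), ‖(D + W)s‖² ≥ (δ₁ − η)‖s‖². In particular if η < δ₁ then D + W is bounded below, hence injective with closed range. -/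
/-! Expanding the square, `‖(D + W)s‖² = ‖Ds‖² + ‖Ws‖² + Re⟪s, (DW + WD)s⟫`, because symmetry of
`D` and `W` turns the cross term `2 Re⟪Ds, Ws⟫` into the anticommutator. Dropping `‖Ds‖²`,
bounding `‖Ws‖² = Re⟪W²s, s⟫` below by `δ₁‖s‖²` and the anticommutator term by Cauchy–Schwarz
gives the estimate; a positive lower bound forces injectivity. -/

namespace LinearMap.IsSymmetric

variable {𝕜 H : Type*} [RCLike 𝕜] [NormedAddCommGroup H] [InnerProductSpace 𝕜 H]
  {T S : H →ₗ[𝕜] H}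

lemma re_inner_apply_apply_self (hS : S.IsSymmetric) (s : H) :
    RCLike.re (inner 𝕜 (S (S s)) s) = ‖S s‖ ^ 2 := by
  rw [hS, inner_self_eq_norm_sq]

lemma two_mul_re_inner_eq_re_inner_anticomm (hT : T.IsSymmetric) (hS : S.IsSymmetric) (s : H) :
    2 * RCLike.re (inner 𝕜 (T s) (S s)) = RCLike.re (inner 𝕜 s (T (S s) + S (T s))) := by
  rw [inner_add_right, ← hT s (S s), ← hS s (T s), ← inner_conj_symm (T s) (S s),
    map_add, RCLike.conj_re]
  ring

lemma norm_add_apply_sq (hT : T.IsSymmetric) (hS : S.IsSymmetric) (s : H) :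
    ‖T s + S s‖ ^ 2 = ‖T s‖ ^ 2 + ‖S s‖ ^ 2 + RCLike.re (inner 𝕜 s (T (S s) + S (T s))) := by
  rw [← two_mul_re_inner_eq_re_inner_anticomm hT hS, norm_add_sq (𝕜 := 𝕜)]
  ring

lemma norm_add_apply_sq_ge_of_anticomm_le (hT : T.IsSymmetric) (hS : S.IsSymmetric)
    {δ η : ℝ} (hS2 : ∀ s, δ * ‖s‖ ^ 2 ≤ RCLike.re (inner 𝕜 (S (S s)) s))
    (hanti : ∀ s, ‖T (S s) + S (T s)‖ ≤ η * ‖s‖) (s : H) :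
    (δ - η) * ‖s‖ ^ 2 ≤ ‖T s + S s‖ ^ 2 := by
  have hcross : -(η * ‖s‖ ^ 2) ≤ RCLike.re (inner 𝕜 s (T (S s) + S (T s))) := by
    have := calc
      |RCLike.re (inner 𝕜 s (T (S s) + S (T s)))| ≤ ‖s‖ * ‖T (S s) + S (T s)‖ :=
        (RCLike.abs_re_le_norm _).trans (norm_inner_le_norm _ _)
      _ ≤ ‖s‖ * (η * ‖s‖) := mul_le_mul_of_nonneg_left (hanti s) (norm_nonneg s)
    linarith [neg_abs_le (RCLike.re (inner 𝕜 s (T (S s) + S (T s))))]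
  rw [norm_add_apply_sq hT hS]
  nlinarith [hS2 s, re_inner_apply_apply_self hS s, sq_nonneg ‖T s‖]

end LinearMap.IsSymmetric

lemma eq_zero_of_mul_norm_sq_le_norm_sq {E F : Type*} [NormedAddCommGroup E]
    [NormedAddCommGroup F] {c : ℝ} (hc : 0 < c) {x : E} {y : F} (h : c * ‖x‖ ^ 2 ≤ ‖y‖ ^ 2)
    (hy : y = 0) : x = 0 := by
  rw [hy, norm_zero, zero_pow two_ne_zero] at h
  have : ‖x‖ ^ 2 = 0 := le_antisymm (nonpos_of_mul_nonpos_right h hc) (sq_nonneg _)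
  exact norm_eq_zero.mp (pow_eq_zero_iff two_ne_zero |>.mp this)

theorem stmt9_general {H : Type*} [NormedAddCommGroup H] [InnerProductSpace ℂ H] [CompleteSpace H]
    (D : H →ₗ[ℂ] H) (hD : D.IsSymmetric)
    (W : H →L[ℂ] H) (hW : IsSelfAdjoint W)
    (δ₁ η : ℝ)
    (hW2 : ∀ s : H, ((inner ℂ (W (W s)) s : ℂ)).re ≥ δ₁ * ‖s‖ ^ 2)
    (hanti : ∀ s : H, ‖D (W s) + W (D s)‖ ≤ η * ‖s‖) :
    (∀ s : H, ‖D s + W s‖ ^ 2 ≥ (δ₁ - η) * ‖s‖ ^ 2) ∧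
      (η < δ₁ → ∀ s : H, D s + W s = 0 → s = 0) := by
  have bound (s : H) : (δ₁ - η) * ‖s‖ ^ 2 ≤ ‖D s + W s‖ ^ 2 :=
    hD.norm_add_apply_sq_ge_of_anticomm_le (S := (W : H →ₗ[ℂ] H)) hW.isSymmetric hW2 hanti s
  exact ⟨bound, fun hlt s =>
    eq_zero_of_mul_norm_sq_le_norm_sq (sub_pos.mpr hlt) (bound s)⟩

/-- If `D` is symmetric, `W` bounded self-adjoint with `W² ≥ δ₁`, and the anticommutator
`DW + WD` is bounded by `η`, then `‖(D+W)s‖² ≥ (δ₁ − η)‖s‖²`; in particular for `η < δ₁`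
the operator `D + W` is injective. -/
theorem stmt9 {H : Type*} [NormedAddCommGroup H] [InnerProductSpace ℂ H] [CompleteSpace H]
    (D : H →ₗ[ℂ] H) (hD : D.IsSymmetric)
    (W : H →L[ℂ] H) (hW : IsSelfAdjoint W)
    (δ₁ η : ℝ) (hδ₁ : 0 < δ₁) (hη : 0 ≤ η)
    (hW2 : ∀ s : H, ((inner ℂ (W (W s)) s : ℂ)).re ≥ δ₁ * ‖s‖ ^ 2)
    (hanti : ∀ s : H, ‖D (W s) + W (D s)‖ ≤ η * ‖s‖) :
    (∀ s : H, ‖D s + W s‖ ^ 2 ≥ (δ₁ - η) * ‖s‖ ^ 2) ∧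
      (η < δ₁ → ∀ s : H, D s + W s = 0 → s = 0) :=
  stmt9_general D hD W hW δ₁ η hW2 hanti
end
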